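/- If P is symmetric positive definite and AᵀPA - P is negative definite, then the spectral radius of A is strictly less than 1. -/

import Mathlib

/-!
If `A v = μ v` with `v = x + i y ∈ ℂⁿ`, then `A x = Re (μ v)` and `A y = Im (μ v)`. The quadratic
form `q v = xᵀ P x + yᵀ P y` (the real part of `v* P v`) scales by `|μ|²` under `v ↦ μ v`, so the
Lyapunov inequality applied to `x` and `y` gives `|μ|² q v < q v`, while `q v > 0` as `P` is
positive definite.
-/

open scoped Matrix

open Complex

variable {ι : Type*}

theorem Complex.re_comp_ne_zero_or_im_comp_ne_zero {v : ι → ℂ} (hv : v ≠ 0) :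
    re ∘ v ≠ 0 ∨ im ∘ v ≠ 0 := by
  by_contra! h
  exact hv (funext fun i => Complex.ext (congrFun h.1 i) (congrFun h.2 i))

namespace Matrix

variable [Fintype ι]

theorem exists_mulVec_eq_smul_of_mem_spectrum {K : Type*} [Field K] [DecidableEq ι]
    {A : Matrix ι ι K} {μ : K} (hμ : μ ∈ spectrum K A) : ∃ v ≠ 0, A *ᵥ v = μ • v := by
  rw [← spectrum_toLin', ← Module.End.hasEigenvalue_iff_mem_spectrum] at hμ
  obtain ⟨v, hv⟩ := hμ.exists_hasEigenvector
  exact ⟨v, hv.2, by simpa using hv.apply_eq_smul⟩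

theorem re_comp_map_ofReal_mulVec {m : Type*} (A : Matrix m ι ℝ) (v : ι → ℂ) :
    re ∘ (A.map ofReal *ᵥ v) = A *ᵥ (re ∘ v) := by
  ext i
  simp [mulVec, dotProduct, re_sum]

theorem im_comp_map_ofReal_mulVec {m : Type*} (A : Matrix m ι ℝ) (v : ι → ℂ) :
    im ∘ (A.map ofReal *ᵥ v) = A *ᵥ (im ∘ v) := by
  ext i
  simp [mulVec, dotProduct, im_sum]

/-- The real part of `v* P v` for a real matrix `P`. -/
def complexQuadForm (P : Matrix ι ι ℝ) (v : ι → ℂ) : ℝ :=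
  (re ∘ v) ⬝ᵥ P *ᵥ (re ∘ v) + (im ∘ v) ⬝ᵥ P *ᵥ (im ∘ v)

theorem complexQuadForm_eq_sum (P : Matrix ι ι ℝ) (v : ι → ℂ) :
    complexQuadForm P v = ∑ i, ∑ j, P i j * (starRingEnd ℂ (v i) * v j).re := by
  simp only [complexQuadForm, dotProduct, mulVec, Finset.mul_sum, ← Finset.sum_add_distrib]
  refine Finset.sum_congr rfl fun i _ => Finset.sum_congr rfl fun j _ => ?_
  simp only [Function.comp_apply, mul_re, conj_re, conj_im]
  ring

theorem complexQuadForm_smul (P : Matrix ι ι ℝ) (c : ℂ) (v : ι → ℂ) :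
    complexQuadForm P (c • v) = ‖c‖ ^ 2 * complexQuadForm P v := by
  have hconj (a b : ℂ) :
      starRingEnd ℂ (c * a) * (c * b) = (‖c‖ ^ 2 : ℝ) * (starRingEnd ℂ a * b) := by
    rw [← normSq_eq_norm_sq, normSq_eq_conj_mul_self, map_mul]
    ring
  simp only [complexQuadForm_eq_sum, Pi.smul_apply, smul_eq_mul, hconj, re_ofReal_mul,
    Finset.mul_sum]
  refine Finset.sum_congr rfl fun i _ => Finset.sum_congr rfl fun j _ => ?_
  ring

theorem PosDef.complexQuadForm_pos {P : Matrix ι ι ℝ} (hP : P.PosDef) {v : ι → ℂ} (hv : v ≠ 0) :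
    0 < complexQuadForm P v := by
  have hpos {z : ι → ℝ} (hz : z ≠ 0) : 0 < z ⬝ᵥ P *ᵥ z := by
    simpa using hP.dotProduct_mulVec_pos hz
  have hnonneg (z : ι → ℝ) : 0 ≤ z ⬝ᵥ P *ᵥ z := by
    simpa using hP.posSemidef.dotProduct_mulVec_nonneg z
  unfold complexQuadForm
  rcases re_comp_ne_zero_or_im_comp_ne_zero hv with h | h
  · linarith [hpos h, hnonneg (im ∘ v)]
  · linarith [hpos h, hnonneg (re ∘ v)]

theorem complexQuadForm_map_ofReal_mulVec_lt {A P : Matrix ι ι ℝ}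
    (hdec : ∀ z : ι → ℝ, z ≠ 0 → A *ᵥ z ⬝ᵥ P *ᵥ (A *ᵥ z) < z ⬝ᵥ P *ᵥ z) {v : ι → ℂ}
    (hv : v ≠ 0) : complexQuadForm P (A.map ofReal *ᵥ v) < complexQuadForm P v := by
  have hle (z : ι → ℝ) : A *ᵥ z ⬝ᵥ P *ᵥ (A *ᵥ z) ≤ z ⬝ᵥ P *ᵥ z := by
    rcases eq_or_ne z 0 with rfl | hz
    · simp
    · exact (hdec z hz).le
  simp only [complexQuadForm, re_comp_map_ofReal_mulVec, im_comp_map_ofReal_mulVec]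
  rcases re_comp_ne_zero_or_im_comp_ne_zero hv with h | h
  · linarith [hdec _ h, hle (im ∘ v)]
  · linarith [hdec _ h, hle (re ∘ v)]

end Matrix

theorem spectral_radius_lt_one_of_lyapunov
    {n : ℕ} (A P : Matrix (Fin n) (Fin n) ℝ) (hP : P.PosDef)
    (hdec : ∀ z : Fin n → ℝ, z ≠ 0 →
      (A.mulVec z) ⬝ᵥ P.mulVec (A.mulVec z) < z ⬝ᵥ P.mulVec z) :
    ∀ μ ∈ spectrum ℂ (A.map (Complex.ofReal)), ‖μ‖ < 1 := by
  intro μ hμ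
  obtain ⟨v, hv, hAv⟩ := Matrix.exists_mulVec_eq_smul_of_mem_spectrum hμ
  have hlt := Matrix.complexQuadForm_map_ofReal_mulVec_lt hdec hv
  rw [hAv, Matrix.complexQuadForm_smul] at hlt
  have hsq : ‖μ‖ ^ 2 < 1 :=
    (mul_lt_iff_lt_one_left (hP.complexQuadForm_pos hv)).mp hlt
  exact (sq_lt_one_iff₀ (norm_nonneg μ)).mp hsq
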